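/- Let X_1,…,X_N and A_1,…,A_N be finite-dimensional complex Hilbert spaces and let S be a positive semidefinite operator on X_1⊗⋯⊗X_N⊗A_1⊗⋯⊗A_N with Tr_{A_1⊗⋯⊗A_N} S = I_{X_1⊗⋯⊗X_N} (i.e., S is the Choi matrix of a completely positive trace-preserving map from X_1⊗⋯⊗X_N to A_1⊗⋯⊗A_N). Suppose the induced map T(ρ) := Tr_{X_1⊗⋯⊗X_N}[(ρ^T ⊗ I) S] is parity-erasure: for every nonempty subset I ⊆ {1,…,N}, all density matrices ρ_{i,0}, ρ_{i,1} on X_i (i ∈ I) and all density matrices σ_j on X_j (j ∉ I), the partial trace over (A_j)_{j∉I} of T(⊗_{i∈I}(ρ_{i,0}−ρ_{i,1}) ⊗ ⊗_{j∉I}σ_j) is zero. Then S satisfies the process conditions (3) for every nonempty I ⊆ {1,…,N}, and Tr S = ∏_{i=1}^N dim X_i. -/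

import Mathlib

open scoped BigOperators ComplexOrder

namespace ParityErasurePaper

/-- A density matrix: a positive semidefinite operator of trace one. -/
def IsDensity {n : Type*} [Fintype n] (ρ : Matrix n n ℂ) : Prop :=
  ρ.PosSemidef ∧ ρ.trace = 1

variable {N : ℕ}

/-- Basis indices for the tensor product `⊗_{i} H_i` where `dim H_i = d i`. -/
abbrev PiIx (d : Fin N → ℕ) : Type := (i : Fin N) → Fin (d i)

/-- Basis indices for `X_1 ⊗ ⋯ ⊗ X_N ⊗ A_1 ⊗ ⋯ ⊗ A_N`. -/
abbrev BigIx (dX dA : Fin N → ℕ) : Type := PiIx dX × PiIx dA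

/-- `P_{X_k}(S) = Tr_{X_k}(S) ⊗ I_{X_k}/d_{X_k}` (with the factor re-inserted in place). -/
noncomputable def depolX (dX dA : Fin N → ℕ) (k : Fin N)
    (S : Matrix (BigIx dX dA) (BigIx dX dA) ℂ) : Matrix (BigIx dX dA) (BigIx dX dA) ℂ :=
  Matrix.of fun p q =>
    (if p.1 k = q.1 k then ((dX k : ℂ))⁻¹ else 0) *
      ∑ z : Fin (dX k), S (Function.update p.1 k z, p.2) (Function.update q.1 k z, q.2)

/-- `P_{A_k}(S) = Tr_{A_k}(S) ⊗ I_{A_k}/d_{A_k}` (with the factor re-inserted in place). -/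
noncomputable def depolA (dX dA : Fin N → ℕ) (k : Fin N)
    (S : Matrix (BigIx dX dA) (BigIx dX dA) ℂ) : Matrix (BigIx dX dA) (BigIx dX dA) ℂ :=
  Matrix.of fun p q =>
    (if p.2 k = q.2 k then ((dA k : ℂ))⁻¹ else 0) *
      ∑ z : Fin (dA k), S (p.1, Function.update p.2 k z) (q.1, Function.update q.2 k z)

/-- The process conditions (3): for every nonempty `I ⊆ {1,…,N}`,
`(∘_{i∈I} (id − P_{X_i})) ∘ (∘_{j∉I} (P_{A_j} ∘ P_{X_j})) (S) = 0`
(the maps commute, so the order of composition is irrelevant). -/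
def ProcessConditions (dX dA : Fin N → ℕ)
    (S : Matrix (BigIx dX dA) (BigIx dX dA) ℂ) : Prop :=
  ∀ I : Finset (Fin N), I.Nonempty →
    ((I.toList.map fun i => fun S' => S' - depolX dX dA i S').foldr (· ∘ ·) id)
      (((Iᶜ.toList.map fun j => fun S' => depolA dX dA j (depolX dX dA j S')).foldr
        (· ∘ ·) id) S) = 0

/-- Partial trace over the tensor factors outside `I`, giving an operator on `⊗_{i∈I} H_i`. -/
noncomputable def ptraceOut {d : Fin N → ℕ} (I : Finset (Fin N)) (M : Matrix (PiIx d) (PiIx d) ℂ) :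
    Matrix ((i : {m // m ∈ I}) → Fin (d i.1)) ((i : {m // m ∈ I}) → Fin (d i.1)) ℂ :=
  Matrix.of fun a b => ∑ c : (j : {m // m ∉ I}) → Fin (d j.1),
    M (fun i => if h : i ∈ I then a ⟨i, h⟩ else c ⟨i, h⟩)
      (fun i => if h : i ∈ I then b ⟨i, h⟩ else c ⟨i, h⟩)

/-- The channel induced by a Choi matrix `S`: `T(ρ) = Tr_input[(ρ^T ⊗ I) S]`,
with the transpose taken in the fixed basis used to express `S`. -/
noncomputable def chan {ι κ : Type*} [Fintype ι] [Fintype κ] [DecidableEq κ]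
    (S : Matrix (ι × κ) (ι × κ) ℂ) (ρ : Matrix ι ι ℂ) : Matrix κ κ ℂ :=
  Matrix.of fun a b => ∑ x : ι,
    ((Matrix.of fun p q : ι × κ => ρ.transpose p.1 q.1 * (if p.2 = q.2 then (1 : ℂ) else 0))
      * S) (x, a) (x, b)

/-- `T` is parity-erasure: for every nonempty `I`, all choices of density matrices
`ρ_{i,0}, ρ_{i,1}` (`i ∈ I`) and `σ_j` (`j ∉ I`), the partial trace over `(A_j)_{j∉I}` of
`T(⊗_{i∈I}(ρ_{i,0} − ρ_{i,1}) ⊗ ⊗_{j∉I} σ_j)` vanishes. -/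
def IsParityErasure (dX dA : Fin N → ℕ)
    (T : Matrix (PiIx dX) (PiIx dX) ℂ → Matrix (PiIx dA) (PiIx dA) ℂ) : Prop :=
  ∀ I : Finset (Fin N), I.Nonempty →
    ∀ ρ : (i : Fin N) → Fin 2 → Matrix (Fin (dX i)) (Fin (dX i)) ℂ,
    ∀ σ : (i : Fin N) → Matrix (Fin (dX i)) (Fin (dX i)) ℂ,
    (∀ i b, IsDensity (ρ i b)) → (∀ j, IsDensity (σ j)) →
    ptraceOut I (T (Matrix.of fun x y =>
        (∏ i ∈ I, (ρ i 0 - ρ i 1) (x i) (y i)) * ∏ j ∈ Iᶜ, σ j (x j) (y j))) = 0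

section Aux

variable {N : ℕ}

private lemma prod_delta {ι : Type*} [Fintype ι] {κ : ι → Type*} [∀ i, DecidableEq (κ i)]
    (x v : (i : ι) → κ i) :
    (∏ i, if x i = v i then (1 : ℂ) else 0) = if x = v then 1 else 0 := by
  by_cases h : x = v
  · simp [h]
  · rw [if_neg h]
    obtain ⟨i, hi⟩ := Function.ne_iff.mp h
    exact Finset.prod_eq_zero (Finset.mem_univ i) (if_neg hi)

private lemma sum_dd {d : ℕ} (x y : Fin d) :
    (∑ t : Fin d, (if x = t then (1 : ℂ) else 0) * (if y = t then 1 else 0))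
      = if x = y then 1 else 0 := by
  simp only [ite_mul, one_mul, zero_mul, Finset.sum_ite_eq, Finset.mem_univ, if_true]
  by_cases h : x = y
  · simp [h]
  · rw [if_neg h, if_neg fun hh => h hh.symm]

private lemma sum_comm5 {a b c d e : Type*} [Fintype a] [Fintype b] [Fintype c] [Fintype d]
    [Fintype e] (f : a → b → c → d → e → ℂ) :
    (∑ t : a, ∑ x : b, ∑ y : c, ∑ α : d, ∑ β : e, f t x y α β)
      = ∑ x : b, ∑ y : c, ∑ α : d, ∑ β : e, ∑ t : a, f t x y α β := by
  rw [Finset.sum_comm]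
  refine Finset.sum_congr rfl fun x _ => ?_
  rw [Finset.sum_comm]
  refine Finset.sum_congr rfl fun y _ => ?_
  rw [Finset.sum_comm]
  refine Finset.sum_congr rfl fun α _ => ?_
  rw [Finset.sum_comm]

private lemma sum_comm4 {a b c e : Type*} [Fintype a] [Fintype b] [Fintype c] [Fintype e]
    (f : a → b → c → e → ℂ) :
    (∑ w : a, ∑ x : b, ∑ y : c, ∑ g : e, f w x y g)
      = ∑ g : e, ∑ w : a, ∑ x : b, ∑ y : c, f w x y g := by
  refine Eq.trans (Finset.sum_congr rfl fun w _ =>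
    Eq.trans (Finset.sum_congr rfl fun x _ => Finset.sum_comm) Finset.sum_comm) Finset.sum_comm

private lemma sum_comm3 {a b c : Type*} [Fintype a] [Fintype b] [Fintype c]
    (f : a → b → c → ℂ) :
    (∑ x : a, ∑ y : b, ∑ w : c, f x y w) = ∑ w : c, ∑ x : a, ∑ y : b, f x y w := by
  refine Eq.trans (Finset.sum_congr rfl fun x _ => Finset.sum_comm) Finset.sum_comm

/-- identity kernel -/
noncomputable def idk (d : ℕ) : Fin d → Fin d → Fin d → Fin d → ℂ :=
  fun P Q x y => (if x = P then 1 else 0) * (if y = Q then 1 else 0)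

/-- trace (depolarizing) kernel -/
noncomputable def trk (d : ℕ) : Fin d → Fin d → Fin d → Fin d → ℂ :=
  fun P Q x y => (if P = Q then ((d : ℂ))⁻¹ else 0) * (if x = y then 1 else 0)

/-- traceless (id - depolarizing) kernel -/
noncomputable def tk (d : ℕ) : Fin d → Fin d → Fin d → Fin d → ℂ :=
  fun P Q x y => idk d P Q x y - trk d P Q x y

/-- closed form for chains of depolarizing operations -/
def CF (dX dA : Fin N → ℕ)
    (gX : (i : Fin N) → Fin (dX i) → Fin (dX i) → Fin (dX i) → Fin (dX i) → ℂ)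
    (gA : (i : Fin N) → Fin (dA i) → Fin (dA i) → Fin (dA i) → Fin (dA i) → ℂ)
    (S M : Matrix (BigIx dX dA) (BigIx dX dA) ℂ) : Prop :=
  ∀ p q : BigIx dX dA, M p q =
    ∑ x : PiIx dX, ∑ y : PiIx dX, ∑ α : PiIx dA, ∑ β : PiIx dA,
      (∏ i, gX i (p.1 i) (q.1 i) (x i) (y i)) *
        ((∏ i, gA i (p.2 i) (q.2 i) (α i) (β i)) * S (x, α) (y, β))

lemma cf_congr {dX dA : Fin N → ℕ} {gX gX' gA gA'} {S M M' : Matrix (BigIx dX dA) (BigIx dX dA) ℂ}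
    (h1 : gX = gX') (h2 : gA = gA') (h3 : M = M') (h : CF dX dA gX gA S M) :
    CF dX dA gX' gA' S M' := by subst h1; subst h2; subst h3; exact h

lemma cf_id (dX dA : Fin N → ℕ) (S : Matrix (BigIx dX dA) (BigIx dX dA) ℂ) :
    CF dX dA (fun i => idk (dX i)) (fun i => idk (dA i)) S S := by
  intro p q
  have hsplit : ∀ (d : Fin N → ℕ) (u v x y : PiIx d),
      (∏ i, idk (d i) (u i) (v i) (x i) (y i))
        = (if x = u then (1 : ℂ) else 0) * (if y = v then 1 else 0) := by
    intro d u v x y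
    rw [← prod_delta x u, ← prod_delta y v, ← Finset.prod_mul_distrib]
    rfl
  symm
  simp only [hsplit]
  simp only [ite_mul, one_mul, zero_mul, mul_ite, mul_zero, Finset.sum_ite_eq',
    Finset.mem_univ, if_true]

end Aux

section Steps

variable {N : ℕ}

lemma step_depolX {dX dA : Fin N → ℕ} {gX gA} {S M : Matrix (BigIx dX dA) (BigIx dX dA) ℂ}
    (hCF : CF dX dA gX gA S M) (j : Fin N) (hj : gX j = idk (dX j)) :
    CF dX dA (Function.update gX j (trk (dX j))) gA S (depolX dX dA j M) := by
  intro p q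
  have h2 : ∀ (t : Fin (dX j)) (x y : PiIx dX),
      (∏ i, gX i (Function.update p.1 j t i) (Function.update q.1 j t i) (x i) (y i))
        = ((if x j = t then (1 : ℂ) else 0) * (if y j = t then 1 else 0)) *
            ∏ i ∈ Finset.univ.erase j, gX i (p.1 i) (q.1 i) (x i) (y i) := by
    intro t x y
    rw [← Finset.mul_prod_erase Finset.univ _ (Finset.mem_univ j)]
    congr 1
    · rw [Function.update_self, Function.update_self, hj]; rfl
    · refine Finset.prod_congr rfl fun i hi => ?_
      rw [Function.update_of_ne (Finset.ne_of_mem_erase hi),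
          Function.update_of_ne (Finset.ne_of_mem_erase hi)]
  have key : ∀ x y : PiIx dX,
      (∏ i, Function.update gX j (trk (dX j)) i (p.1 i) (q.1 i) (x i) (y i))
        = (if p.1 j = q.1 j then ((dX j : ℂ))⁻¹ else 0) *
            ∑ t : Fin (dX j),
              ∏ i, gX i (Function.update p.1 j t i) (Function.update q.1 j t i) (x i) (y i) := by
    intro x y
    rw [← Finset.mul_prod_erase Finset.univ _ (Finset.mem_univ j)]
    simp only [h2]
    rw [← Finset.sum_mul, sum_dd, Function.update_self]
    have h3 : (∏ i ∈ Finset.univ.erase j,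
        Function.update gX j (trk (dX j)) i (p.1 i) (q.1 i) (x i) (y i))
        = ∏ i ∈ Finset.univ.erase j, gX i (p.1 i) (q.1 i) (x i) (y i) :=
      Finset.prod_congr rfl fun i hi => by
        rw [Function.update_of_ne (Finset.ne_of_mem_erase hi)]
    rw [h3, trk]
    ring
  show (if p.1 j = q.1 j then ((dX j : ℂ))⁻¹ else 0) *
      (∑ t : Fin (dX j), M (Function.update p.1 j t, p.2) (Function.update q.1 j t, q.2)) = _
  have hM := fun t : Fin (dX j) =>
    hCF (Function.update p.1 j t, p.2) (Function.update q.1 j t, q.2)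
  simp only [hM]

  simp only [Finset.mul_sum]
  rw [sum_comm5]
  refine Finset.sum_congr rfl fun x _ => Finset.sum_congr rfl fun y _ =>
    Finset.sum_congr rfl fun α _ => Finset.sum_congr rfl fun β _ => ?_
  conv_rhs => rw [key x y]
  simp only [Finset.mul_sum, Finset.sum_mul]
  exact Finset.sum_congr rfl fun t _ => by ring

lemma step_depolA {dX dA : Fin N → ℕ} {gX gA} {S M : Matrix (BigIx dX dA) (BigIx dX dA) ℂ}
    (hCF : CF dX dA gX gA S M) (j : Fin N) (hj : gA j = idk (dA j)) :
    CF dX dA gX (Function.update gA j (trk (dA j))) S (depolA dX dA j M) := by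
  intro p q
  have h2 : ∀ (t : Fin (dA j)) (α β : PiIx dA),
      (∏ i, gA i (Function.update p.2 j t i) (Function.update q.2 j t i) (α i) (β i))
        = ((if α j = t then (1 : ℂ) else 0) * (if β j = t then 1 else 0)) *
            ∏ i ∈ Finset.univ.erase j, gA i (p.2 i) (q.2 i) (α i) (β i) := by
    intro t α β
    rw [← Finset.mul_prod_erase Finset.univ _ (Finset.mem_univ j)]
    congr 1
    · rw [Function.update_self, Function.update_self, hj]; rfl
    · refine Finset.prod_congr rfl fun i hi => ?_
      rw [Function.update_of_ne (Finset.ne_of_mem_erase hi),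
          Function.update_of_ne (Finset.ne_of_mem_erase hi)]
  have key : ∀ α β : PiIx dA,
      (∏ i, Function.update gA j (trk (dA j)) i (p.2 i) (q.2 i) (α i) (β i))
        = (if p.2 j = q.2 j then ((dA j : ℂ))⁻¹ else 0) *
            ∑ t : Fin (dA j),
              ∏ i, gA i (Function.update p.2 j t i) (Function.update q.2 j t i) (α i) (β i) := by
    intro α β
    rw [← Finset.mul_prod_erase Finset.univ _ (Finset.mem_univ j)]
    simp only [h2]
    rw [← Finset.sum_mul, sum_dd, Function.update_self]
    have h3 : (∏ i ∈ Finset.univ.erase j,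
        Function.update gA j (trk (dA j)) i (p.2 i) (q.2 i) (α i) (β i))
        = ∏ i ∈ Finset.univ.erase j, gA i (p.2 i) (q.2 i) (α i) (β i) :=
      Finset.prod_congr rfl fun i hi => by
        rw [Function.update_of_ne (Finset.ne_of_mem_erase hi)]
    rw [h3, trk]
    ring
  show (if p.2 j = q.2 j then ((dA j : ℂ))⁻¹ else 0) *
      (∑ t : Fin (dA j), M (p.1, Function.update p.2 j t) (q.1, Function.update q.2 j t)) = _
  have hM := fun t : Fin (dA j) =>
    hCF (p.1, Function.update p.2 j t) (q.1, Function.update q.2 j t)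
  simp only [hM]

  simp only [Finset.mul_sum]
  rw [sum_comm5]
  refine Finset.sum_congr rfl fun x _ => Finset.sum_congr rfl fun y _ =>
    Finset.sum_congr rfl fun α _ => Finset.sum_congr rfl fun β _ => ?_
  conv_rhs => rw [key α β]
  simp only [Finset.mul_sum, Finset.sum_mul]
  exact Finset.sum_congr rfl fun t _ => by ring

lemma step_sub {dX dA : Fin N → ℕ} {gX gA} {S M : Matrix (BigIx dX dA) (BigIx dX dA) ℂ}
    (hCF : CF dX dA gX gA S M) (j : Fin N) (hj : gX j = idk (dX j)) :
    CF dX dA (Function.update gX j (tk (dX j))) gA S (M - depolX dX dA j M) := by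
  have h2 := step_depolX hCF j hj
  intro p q
  rw [Matrix.sub_apply, hCF p q, h2 p q, ← Finset.sum_sub_distrib]
  refine Finset.sum_congr rfl fun x _ => ?_
  rw [← Finset.sum_sub_distrib]
  refine Finset.sum_congr rfl fun y _ => ?_
  rw [← Finset.sum_sub_distrib]
  refine Finset.sum_congr rfl fun α _ => ?_
  rw [← Finset.sum_sub_distrib]
  refine Finset.sum_congr rfl fun β _ => ?_
  have e1 : (∏ i, gX i (p.1 i) (q.1 i) (x i) (y i))
      = gX j (p.1 j) (q.1 j) (x j) (y j) *
          ∏ i ∈ Finset.univ.erase j, gX i (p.1 i) (q.1 i) (x i) (y i) :=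
    (Finset.mul_prod_erase Finset.univ _ (Finset.mem_univ j)).symm
  have e2 : (∏ i, Function.update gX j (trk (dX j)) i (p.1 i) (q.1 i) (x i) (y i))
      = trk (dX j) (p.1 j) (q.1 j) (x j) (y j) *
          ∏ i ∈ Finset.univ.erase j, gX i (p.1 i) (q.1 i) (x i) (y i) := by
    rw [← Finset.mul_prod_erase Finset.univ _ (Finset.mem_univ j), Function.update_self]
    congr 1
    exact Finset.prod_congr rfl fun i hi => by
      rw [Function.update_of_ne (Finset.ne_of_mem_erase hi)]
  have e3 : (∏ i, Function.update gX j (tk (dX j)) i (p.1 i) (q.1 i) (x i) (y i))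
      = tk (dX j) (p.1 j) (q.1 j) (x j) (y j) *
          ∏ i ∈ Finset.univ.erase j, gX i (p.1 i) (q.1 i) (x i) (y i) := by
    rw [← Finset.mul_prod_erase Finset.univ _ (Finset.mem_univ j), Function.update_self]
    congr 1
    exact Finset.prod_congr rfl fun i hi => by
      rw [Function.update_of_ne (Finset.ne_of_mem_erase hi)]
  rw [e1, e2, e3, hj, tk]
  ring

end Steps

section Chains

variable {N : ℕ}

lemma chainT (dX dA : Fin N → ℕ) (S : Matrix (BigIx dX dA) (BigIx dX dA) ℂ) :
    ∀ (L : List (Fin N)), L.Nodup →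
      ∀ gX gA (M : Matrix (BigIx dX dA) (BigIx dX dA) ℂ), CF dX dA gX gA S M →
      (∀ j ∈ L, gX j = idk (dX j)) → (∀ j ∈ L, gA j = idk (dA j)) →
      CF dX dA (fun i => if i ∈ L then trk (dX i) else gX i)
        (fun i => if i ∈ L then trk (dA i) else gA i) S
        (((L.map fun j => fun S' => depolA dX dA j (depolX dX dA j S')).foldr (· ∘ ·) id) M)
  | [], _, gX, gA, M, hCF, _, _ => by
      simpa using hCF
  | j :: L, hnd, gX, gA, M, hCF, hX, hA => by
      obtain ⟨hjL, hnd'⟩ := List.nodup_cons.mp hnd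
      have IH := chainT dX dA S L hnd' gX gA M hCF
        (fun k hk => hX k (List.mem_cons_of_mem _ hk))
        (fun k hk => hA k (List.mem_cons_of_mem _ hk))
      have hgX : (fun i => if i ∈ L then trk (dX i) else gX i) j = idk (dX j) := by
        show (if j ∈ L then trk (dX j) else gX j) = idk (dX j)
        rw [if_neg hjL]; exact hX j (List.mem_cons_self)
      have hgA : (fun i => if i ∈ L then trk (dA i) else gA i) j = idk (dA j) := by
        show (if j ∈ L then trk (dA j) else gA j) = idk (dA j)
        rw [if_neg hjL]; exact hA j (List.mem_cons_self)
      have s1 := step_depolX IH j hgX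
      have s2 := step_depolA s1 j hgA
      refine cf_congr ?_ ?_ rfl s2
      · funext i
        by_cases h : i = j
        · subst h; simp [Function.update_self, List.mem_cons]
        · simp [Function.update_of_ne h, List.mem_cons, h]
      · funext i
        by_cases h : i = j
        · subst h; simp [Function.update_self, List.mem_cons]
        · simp [Function.update_of_ne h, List.mem_cons, h]

lemma chainD (dX dA : Fin N → ℕ) (S : Matrix (BigIx dX dA) (BigIx dX dA) ℂ) :
    ∀ (L : List (Fin N)), L.Nodup →
      ∀ gX gA (M : Matrix (BigIx dX dA) (BigIx dX dA) ℂ), CF dX dA gX gA S M →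
      (∀ j ∈ L, gX j = idk (dX j)) →
      CF dX dA (fun i => if i ∈ L then tk (dX i) else gX i) gA S
        (((L.map fun i => fun S' => S' - depolX dX dA i S').foldr (· ∘ ·) id) M)
  | [], _, gX, gA, M, hCF, _ => by
      simpa using hCF
  | j :: L, hnd, gX, gA, M, hCF, hX => by
      obtain ⟨hjL, hnd'⟩ := List.nodup_cons.mp hnd
      have IH := chainD dX dA S L hnd' gX gA M hCF
        (fun k hk => hX k (List.mem_cons_of_mem _ hk))
      have hgX : (fun i => if i ∈ L then tk (dX i) else gX i) j = idk (dX j) := by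
        show (if j ∈ L then tk (dX j) else gX j) = idk (dX j)
        rw [if_neg hjL]; exact hX j (List.mem_cons_self)
      have s1 := step_sub IH j hgX
      refine cf_congr ?_ rfl rfl s1
      funext i
      by_cases h : i = j
      · subst h; simp [Function.update_self, List.mem_cons]
      · simp [Function.update_of_ne h, List.mem_cons, h]

end Chains

section Densities

open Matrix

lemma complex_nonneg_natInv (d : ℕ) : (0 : ℂ) ≤ ((d : ℂ))⁻¹ := by
  have : ((d : ℂ))⁻¹ = (((d : ℝ))⁻¹ : ℝ) := by push_cast; ring
  rw [this, Complex.zero_le_real]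
  positivity

lemma complex_nonneg_half : (0 : ℂ) ≤ ((2 : ℂ))⁻¹ := by
  have h := complex_nonneg_natInv 2
  norm_num at h ⊢
  exact h

lemma posSemidef_smul_of_nonneg {d : ℕ} {M : Matrix (Fin d) (Fin d) ℂ}
    (h : M.PosSemidef) {c : ℂ} (hc : 0 ≤ c) : (c • M).PosSemidef := by
  refine Matrix.posSemidef_iff_dotProduct_mulVec.mpr ⟨?_, ?_⟩
  · have hst : star c = c := (IsSelfAdjoint.of_nonneg hc).star_eq
    show (c • M)ᴴ = c • M
    rw [Matrix.conjTranspose_smul, hst, h.1]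
  · intro z
    rw [Matrix.smul_mulVec, dotProduct_smul, smul_eq_mul]
    exact mul_nonneg hc (h.dotProduct_mulVec_nonneg z)

/-- rank-one matrix from a vector -/
noncomputable def pureM {d : ℕ} (f : Fin d → ℂ) : Matrix (Fin d) (Fin d) ℂ :=
  Matrix.of fun x y => f x * star (f y)

lemma pureM_posSemidef {d : ℕ} (f : Fin d → ℂ) : (pureM f).PosSemidef := by
  refine Matrix.posSemidef_iff_dotProduct_mulVec.mpr ⟨?_, ?_⟩
  · ext x y
    simp [pureM, Matrix.conjTranspose_apply, mul_comm]
  · intro z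
    have h0 : dotProduct (star z) ((pureM f) *ᵥ z)
        = (∑ i, star (z i) * f i) * ∑ i, star (f i) * z i := by
      rw [Finset.sum_mul_sum]
      simp only [dotProduct, Matrix.mulVec, Pi.star_apply, pureM, Matrix.of_apply,
        Finset.mul_sum]
      exact Finset.sum_congr rfl fun x _ => Finset.sum_congr rfl fun y _ => by ring
    rw [h0]
    have h1 : (∑ i, star (z i) * f i) = star (∑ i, star (f i) * z i) := by
      rw [star_sum]
      exact Finset.sum_congr rfl fun i _ => by rw [StarMul.star_mul, star_star]
    rw [h1]
    exact star_mul_self_nonneg _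

lemma pureM_trace {d : ℕ} (f : Fin d → ℂ) : (pureM f).trace = ∑ x, f x * star (f x) := by
  simp [Matrix.trace, Matrix.diag, pureM]

lemma isDensity_unif {d : ℕ} (hd : 0 < d) :
    IsDensity (((d : ℂ))⁻¹ • (1 : Matrix (Fin d) (Fin d) ℂ)) := by
  have hdC : (d : ℂ) ≠ 0 := Nat.cast_ne_zero.mpr hd.ne'
  refine ⟨posSemidef_smul_of_nonneg Matrix.PosSemidef.one (complex_nonneg_natInv d), ?_⟩
  rw [Matrix.trace_smul, Matrix.trace_one]
  simp [inv_mul_cancel₀ hdC]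

lemma unif_apply {d : ℕ} (x y : Fin d) :
    (((d : ℂ))⁻¹ • (1 : Matrix (Fin d) (Fin d) ℂ)) x y
      = ((d : ℂ))⁻¹ * (if x = y then 1 else 0) := by
  simp [Matrix.smul_apply, Matrix.one_apply]

lemma isDensity_half_pure {d : ℕ} (f : Fin d → ℂ) (hf : (∑ x, f x * star (f x)) = 2) :
    IsDensity (((2 : ℂ))⁻¹ • pureM f) := by
  refine ⟨posSemidef_smul_of_nonneg (pureM_posSemidef f) complex_nonneg_half, ?_⟩
  rw [Matrix.trace_smul, smul_eq_mul, pureM_trace, hf]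
  norm_num

end Densities

section Decomp

/-- basis vector -/
noncomputable def ebv {d : ℕ} (u : Fin d) : Fin d → ℂ := fun x => if x = u then 1 else 0

lemma isDensity_point {d : ℕ} (u : Fin d) : IsDensity (pureM (ebv u)) := by
  refine ⟨pureM_posSemidef _, ?_⟩
  rw [pureM_trace]
  have h : ∀ x, ebv u x * star (ebv u x) = if x = u then (1 : ℂ) else 0 := by
    intro x; by_cases hx : x = u <;> simp [ebv, hx]
  simp only [h]
  simp

lemma tk_decomp {d : ℕ} (hd : 0 < d) (u v : Fin d) :
    ∃ (cc : Fin 2 → ℂ) (ρ : Fin 2 → Fin 2 → Matrix (Fin d) (Fin d) ℂ),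
      (∀ t b, IsDensity (ρ t b)) ∧
      ∀ x y, tk d u v x y = ∑ t : Fin 2, cc t * ((ρ t 0 - ρ t 1) x y) := by
  by_cases huv : u = v
  · subst huv
    refine ⟨![1, 0],
      ![![pureM (ebv u), ((d : ℂ))⁻¹ • 1], ![((d : ℂ))⁻¹ • 1, ((d : ℂ))⁻¹ • 1]], ?_, ?_⟩
    · intro t b
      fin_cases t <;> fin_cases b <;>
        simp [isDensity_point, isDensity_unif hd]
    · intro x y
      simp only [Fin.sum_univ_two, Matrix.cons_val_zero, Matrix.cons_val_one, Matrix.head_cons,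
        Matrix.sub_apply, Matrix.smul_apply, Matrix.one_apply, smul_eq_mul, pureM,
        Matrix.of_apply, tk, idk, trk, if_pos rfl, ebv]
      by_cases hxu : x = u <;> by_cases hyu : y = u <;> by_cases hxy : x = y <;>
        simp [hxu, hyu, hxy] <;> ring
  · have hvu : ¬v = u := fun h => huv h.symm
    refine ⟨![(2 : ℂ)⁻¹, Complex.I / 2],
      ![![(2 : ℂ)⁻¹ • pureM (fun x => ebv u x + 1 * ebv v x),
         (2 : ℂ)⁻¹ • pureM (fun x => ebv u x + (-1) * ebv v x)],
        ![(2 : ℂ)⁻¹ • pureM (fun x => ebv u x + Complex.I * ebv v x),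
         (2 : ℂ)⁻¹ • pureM (fun x => ebv u x + (-Complex.I) * ebv v x)]], ?_, ?_⟩
    · have hsum : ∀ (c : ℂ), star c * c = 1 →
          (∑ x, (ebv u x + c * ebv v x) * star (ebv u x + c * ebv v x)) = 2 := by
        intro c hc
        have h : ∀ x, (ebv u x + c * ebv v x) * star (ebv u x + c * ebv v x)
            = (if x = u then (1 : ℂ) else 0) + (if x = v then 1 else 0) := by
          intro x
          by_cases hxu : x = u <;> by_cases hxv : x = v
          · exact absurd (hxu.symm.trans hxv) huv
          · simp [ebv, hxu, hxv, hvu, huv]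
          · simp [ebv, hxu, hxv, hvu]
            first
              | exact hc
              | (rw [mul_comm]; exact hc)
          · simp [ebv, hxu, hxv]
        simp only [h]
        have h2 : ∀ w : Fin d, (∑ x, if x = w then (1 : ℂ) else 0) = 1 := by
          intro w; simp
        rw [Finset.sum_add_distrib, h2, h2]
        norm_num
      intro t b
      fin_cases t <;> fin_cases b <;> refine isDensity_half_pure _ (hsum _ ?_)
      · simp
      · simp
      · simp [Complex.star_def, Complex.conj_I]
      · simp [Complex.star_def, Complex.conj_I]
    · intro x y
      simp only [Fin.sum_univ_two, Matrix.cons_val_zero, Matrix.cons_val_one, Matrix.head_cons,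
        Matrix.sub_apply, Matrix.smul_apply, smul_eq_mul, pureM, Matrix.of_apply,
        tk, idk, trk, if_neg huv, ebv]
      by_cases hxu : x = u <;> by_cases hxv : x = v <;> by_cases hyu : y = u <;>
          by_cases hyv : y = v <;>
        first
          | exact absurd (hxu.symm.trans hxv) huv
          | exact absurd (hyu.symm.trans hyv) huv
          | (simp only [hxu, hxv, hyu, hyv, if_pos, if_neg, if_true, if_false, ite_true,
               ite_false, star_add, star_mul', star_one, star_zero, star_neg, map_one, map_zero,
               Complex.star_def, Complex.conj_I, if_neg hvu, if_neg huv]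
             try ring_nf
             try simp [Complex.I_sq]
             try ring_nf)

end Decomp

section Bridge

variable {N : ℕ}

lemma chan_apply {ι κ : Type*} [Fintype ι] [Fintype κ] [DecidableEq κ]
    (S : Matrix (ι × κ) (ι × κ) ℂ) (ρ : Matrix ι ι ℂ) (a b : κ) :
    chan S ρ a b = ∑ x : ι, ∑ r : ι, ρ r x * S (r, a) (x, b) := by
  show (∑ x : ι, ((Matrix.of fun p q : ι × κ =>
      ρ.transpose p.1 q.1 * (if p.2 = q.2 then (1 : ℂ) else 0)) * S) (x, a) (x, b)) = _
  refine Finset.sum_congr rfl fun x _ => ?_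
  rw [Matrix.mul_apply, Fintype.sum_prod_type]
  refine Finset.sum_congr rfl fun r _ => ?_
  simp [Matrix.transpose_apply, ite_mul, zero_mul, mul_ite, mul_zero,
    Finset.sum_ite_eq, Finset.mem_univ]

lemma bridgeA {d : Fin N → ℕ} (I : Finset (Fin N)) (u v : PiIx d)
    (huv : ∀ j, j ∉ I → u j = v j) (W : PiIx d → PiIx d → ℂ) :
    (∑ α : PiIx d, ∑ β : PiIx d,
      (∏ i, if i ∈ I then idk (d i) (u i) (v i) (α i) (β i)
            else trk (d i) (u i) (v i) (α i) (β i)) * W α β)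
    = (∏ j : {m // m ∉ I}, ((d j.1 : ℂ))⁻¹) *
        ∑ c : (j : {m // m ∉ I}) → Fin (d j.1),
          W (fun i => if h : i ∈ I then u i else c ⟨i, h⟩)
            (fun i => if h : i ∈ I then v i else c ⟨i, h⟩) := by
  classical
  set e := (Equiv.piEquivPiSubtypeProd (fun m => m ∈ I) (fun i => Fin (d i))).symm with he
  have hpair : ∀ (F : PiIx d → PiIx d → ℂ),
      (∑ α : PiIx d, ∑ β : PiIx d, F α β) = ∑ z, ∑ w, F (e z) (e w) := by
    intro F
    rw [← Equiv.sum_comp e (fun α => ∑ β, F α β)]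
    exact Finset.sum_congr rfl fun z _ => (Equiv.sum_comp e (F (e z))).symm
  rw [hpair]
  simp only [Fintype.sum_prod_type]
  have happ : ∀ (a1 : (i : {m // m ∈ I}) → Fin (d i.1)) (a2 : (j : {m // m ∉ I}) → Fin (d j.1))
      (i : Fin N), e (a1, a2) i = if h : i ∈ I then a1 ⟨i, h⟩ else a2 ⟨i, h⟩ := by
    intro a1 a2 i
    rw [he, Equiv.piEquivPiSubtypeProd_symm_apply]
  have hprod : ∀ (a1 b1 : (i : {m // m ∈ I}) → Fin (d i.1))
      (a2 b2 : (j : {m // m ∉ I}) → Fin (d j.1)),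
      (∏ i, if i ∈ I then idk (d i) (u i) (v i) (e (a1, a2) i) (e (b1, b2) i)
            else trk (d i) (u i) (v i) (e (a1, a2) i) (e (b1, b2) i))
      = (if a1 = (fun i : {m // m ∈ I} => u i.1) then (1 : ℂ) else 0) *
          ((if b1 = (fun i : {m // m ∈ I} => v i.1) then (1 : ℂ) else 0) *
            ((∏ j : {m // m ∉ I}, ((d j.1 : ℂ))⁻¹) * (if a2 = b2 then 1 else 0))) := by
    intro a1 b1 a2 b2
    rw [← Equiv.prod_comp (Equiv.sumCompl (fun m => m ∈ I))
      (fun i => if i ∈ I then idk (d i) (u i) (v i) (e (a1, a2) i) (e (b1, b2) i)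
            else trk (d i) (u i) (v i) (e (a1, a2) i) (e (b1, b2) i)), Fintype.prod_sum_type]
    simp only [Equiv.sumCompl_apply_inl, Equiv.sumCompl_apply_inr]
    have h1 : (∏ i : {m // m ∈ I},
        if (i : Fin N) ∈ I then
          idk (d i.1) (u i.1) (v i.1) (e (a1, a2) i.1) (e (b1, b2) i.1)
        else trk (d i.1) (u i.1) (v i.1) (e (a1, a2) i.1) (e (b1, b2) i.1))
        = (if a1 = (fun i : {m // m ∈ I} => u i.1) then (1 : ℂ) else 0) *
            (if b1 = (fun i : {m // m ∈ I} => v i.1) then (1 : ℂ) else 0) := by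
      rw [← prod_delta a1 (fun i : {m // m ∈ I} => u i.1),
        ← prod_delta b1 (fun i : {m // m ∈ I} => v i.1), ← Finset.prod_mul_distrib]
      refine Finset.prod_congr rfl fun i _ => ?_
      rw [if_pos i.2]
      show idk (d i.1) (u i.1) (v i.1) (e (a1, a2) i.1) (e (b1, b2) i.1) = _
      rw [idk, happ, happ, dif_pos i.2, dif_pos i.2]
    have h2 : (∏ j : {m // m ∉ I},
        if (j : Fin N) ∈ I then
          idk (d j.1) (u j.1) (v j.1) (e (a1, a2) j.1) (e (b1, b2) j.1)
        else trk (d j.1) (u j.1) (v j.1) (e (a1, a2) j.1) (e (b1, b2) j.1))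
        = (∏ j : {m // m ∉ I}, ((d j.1 : ℂ))⁻¹) * (if a2 = b2 then 1 else 0) := by
      rw [← prod_delta a2 b2, ← Finset.prod_mul_distrib]
      refine Finset.prod_congr rfl fun j _ => ?_
      rw [if_neg j.2]
      show trk (d j.1) (u j.1) (v j.1) (e (a1, a2) j.1) (e (b1, b2) j.1) = _
      rw [trk, happ, happ, dif_neg j.2, dif_neg j.2, if_pos (huv j.1 j.2)]
    refine (congrArg₂ (· * ·) h1 h2).trans ?_
    ring
  simp only [hprod]
  simp only [ite_mul, one_mul, zero_mul, mul_ite, mul_zero, Finset.sum_ite_eq,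
    Finset.sum_ite_eq', Finset.mem_univ, if_true]
  rw [Finset.sum_comm]
  simp only [Finset.sum_ite_eq', Finset.mem_univ, if_true, mul_one]
  rw [Finset.mul_sum]
  refine Finset.sum_congr rfl fun c _ => ?_
  have hg1 : e ((fun i : {m // m ∈ I} => u i.1), c)
      = fun i => if h : i ∈ I then u i else c ⟨i, h⟩ := by
    funext i; rw [happ]
  have hg2 : e ((fun i : {m // m ∈ I} => v i.1), c)
      = fun i => if h : i ∈ I then v i else c ⟨i, h⟩ := by
    funext i; rw [happ]
  rw [hg1, hg2]

end Bridge

section ExtPE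

variable {N : ℕ}

lemma ext_PE {dX dA : Fin N → ℕ} (S : Matrix (BigIx dX dA) (BigIx dX dA) ℂ)
    (hdX : ∀ i, 0 < dX i) (hPE : IsParityErasure dX dA (chan S))
    (I : Finset (Fin N)) (hI : I.Nonempty) (u v : PiIx dX) (a b : PiIx dA) :
    (∑ c : (j : {m // m ∉ I}) → Fin (dA j.1), ∑ x : PiIx dX, ∑ y : PiIx dX,
      (∏ i ∈ I, tk (dX i) (u i) (v i) (x i) (y i)) *
        ((∏ j ∈ Iᶜ, (((dX j : ℂ))⁻¹ * if x j = y j then 1 else 0)) *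
          S (x, fun i => if h : i ∈ I then a i else c ⟨i, h⟩)
            (y, fun i => if h : i ∈ I then b i else c ⟨i, h⟩))) = 0 := by
  classical
  choose cc ρd hdens hdec using fun i : Fin N => tk_decomp (hdX i) (u i) (v i)
  have hPE' : ∀ g : Fin N → Fin 2,
      (∑ c : (j : {m // m ∉ I}) → Fin (dA j.1), ∑ x : PiIx dX, ∑ y : PiIx dX,
        (∏ i ∈ I, ((ρd i (g i) 0 - ρd i (g i) 1) (x i) (y i))) *
          ((∏ j ∈ Iᶜ, (((dX j : ℂ))⁻¹ * if x j = y j then 1 else 0)) *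
            S (x, fun i => if h : i ∈ I then a i else c ⟨i, h⟩)
              (y, fun i => if h : i ∈ I then b i else c ⟨i, h⟩))) = 0 := by
    intro g
    have h0 := hPE I hI (fun i => ρd i (g i)) (fun j => ((dX j : ℂ))⁻¹ • 1)
      (fun i bb => hdens i (g i) bb) (fun j => isDensity_unif (hdX j))
    have h1 := congrFun (congrFun (congrArg (fun (M : Matrix _ _ ℂ) =>
      (M : _ → _ → ℂ)) h0) (fun i : {m // m ∈ I} => a i.1)) (fun i : {m // m ∈ I} => b i.1)
    simp only [ptraceOut, Matrix.of_apply, Matrix.zero_apply] at h1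
    refine Eq.trans ?_ h1
    refine Finset.sum_congr rfl fun c _ => ?_
    rw [chan_apply]
    rw [Finset.sum_comm]
    refine Finset.sum_congr rfl fun x _ => Finset.sum_congr rfl fun y _ => ?_
    simp only [Matrix.of_apply, unif_apply]
    ring
  have hexp : ∀ x y : PiIx dX,
      (∏ i ∈ I, tk (dX i) (u i) (v i) (x i) (y i))
        = ∑ g : Fin N → Fin 2,
            (∏ i ∈ I, cc i (g i)) *
              ((∏ j ∈ Iᶜ, if g j = 0 then (1 : ℂ) else 0) *
                ∏ i ∈ I, ((ρd i (g i) 0 - ρd i (g i) 1) (x i) (y i))) := by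
    intro x y
    have h1 : ∀ i : Fin N,
        (∑ t : Fin 2, if i ∈ I then cc i t * ((ρd i t 0 - ρd i t 1) (x i) (y i))
          else if t = 0 then (1 : ℂ) else 0)
        = if i ∈ I then tk (dX i) (u i) (v i) (x i) (y i) else 1 := by
      intro i
      by_cases hi : i ∈ I
      · simp only [if_pos hi]
        exact (hdec i (x i) (y i)).symm
      · simp [if_neg hi]
    have h2 : ∀ g : Fin N → Fin 2,
        (∏ i, if i ∈ I then cc i (g i) * ((ρd i (g i) 0 - ρd i (g i) 1) (x i) (y i))
          else if g i = 0 then (1 : ℂ) else 0)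
        = (∏ i ∈ I, cc i (g i)) *
            ((∏ j ∈ Iᶜ, if g j = 0 then (1 : ℂ) else 0) *
              ∏ i ∈ I, ((ρd i (g i) 0 - ρd i (g i) 1) (x i) (y i))) := by
      intro g
      have e1 : (∏ i ∈ I, if i ∈ I then cc i (g i) * ((ρd i (g i) 0 - ρd i (g i) 1) (x i) (y i))
          else if g i = 0 then (1 : ℂ) else 0)
          = ∏ i ∈ I, cc i (g i) * ((ρd i (g i) 0 - ρd i (g i) 1) (x i) (y i)) :=
        Finset.prod_congr rfl fun i hi => if_pos hi
      have e2 : (∏ j ∈ Iᶜ, if j ∈ I then cc j (g j) * ((ρd j (g j) 0 - ρd j (g j) 1) (x j) (y j))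
          else if g j = 0 then (1 : ℂ) else 0)
          = ∏ j ∈ Iᶜ, if g j = 0 then (1 : ℂ) else 0 :=
        Finset.prod_congr rfl fun j hj => if_neg (Finset.mem_compl.mp hj)
      rw [← Finset.prod_mul_prod_compl I, e1, e2, Finset.prod_mul_distrib]
      ring
    calc (∏ i ∈ I, tk (dX i) (u i) (v i) (x i) (y i))
        = ∏ i, (if i ∈ I then tk (dX i) (u i) (v i) (x i) (y i) else 1) := by
          rw [Finset.prod_ite_mem, Finset.univ_inter]
      _ = ∏ i, ∑ t : Fin 2, (if i ∈ I then cc i t * ((ρd i t 0 - ρd i t 1) (x i) (y i))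
            else if t = 0 then (1 : ℂ) else 0) :=
          Finset.prod_congr rfl fun i _ => (h1 i).symm
      _ = ∑ g ∈ Fintype.piFinset (fun _ : Fin N => (Finset.univ : Finset (Fin 2))),
            ∏ i, (if i ∈ I then cc i (g i) * ((ρd i (g i) 0 - ρd i (g i) 1) (x i) (y i))
              else if g i = 0 then (1 : ℂ) else 0) := Finset.prod_univ_sum _ _
      _ = ∑ g : Fin N → Fin 2,
            ∏ i, (if i ∈ I then cc i (g i) * ((ρd i (g i) 0 - ρd i (g i) 1) (x i) (y i))
              else if g i = 0 then (1 : ℂ) else 0) := by rw [Fintype.piFinset_univ]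
      _ = _ := Finset.sum_congr rfl fun g _ => h2 g
  simp only [hexp, Finset.sum_mul]
  rw [sum_comm4]
  refine Finset.sum_eq_zero fun g _ => ?_
  have hz := hPE' g
  calc (∑ c : (j : {m // m ∉ I}) → Fin (dA j.1), ∑ x : PiIx dX, ∑ y : PiIx dX,
        ((∏ i ∈ I, cc i (g i)) *
          ((∏ j ∈ Iᶜ, if g j = 0 then (1 : ℂ) else 0) *
            ∏ i ∈ I, ((ρd i (g i) 0 - ρd i (g i) 1) (x i) (y i)))) *
          ((∏ j ∈ Iᶜ, (((dX j : ℂ))⁻¹ * if x j = y j then 1 else 0)) *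
            S (x, fun i => if h : i ∈ I then a i else c ⟨i, h⟩)
              (y, fun i => if h : i ∈ I then b i else c ⟨i, h⟩)))
      = ((∏ i ∈ I, cc i (g i)) * (∏ j ∈ Iᶜ, if g j = 0 then (1 : ℂ) else 0)) *
          (∑ c : (j : {m // m ∉ I}) → Fin (dA j.1), ∑ x : PiIx dX, ∑ y : PiIx dX,
            (∏ i ∈ I, ((ρd i (g i) 0 - ρd i (g i) 1) (x i) (y i))) *
              ((∏ j ∈ Iᶜ, (((dX j : ℂ))⁻¹ * if x j = y j then 1 else 0)) *
                S (x, fun i => if h : i ∈ I then a i else c ⟨i, h⟩)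
                  (y, fun i => if h : i ∈ I then b i else c ⟨i, h⟩))) := by
        simp only [Finset.mul_sum]
        refine Finset.sum_congr rfl fun c _ => Finset.sum_congr rfl fun x _ =>
          Finset.sum_congr rfl fun y _ => by ring
    _ = 0 := by rw [hz, mul_zero]

end ExtPE

section EntryZero

variable {N : ℕ}

lemma entry_zero {dX dA : Fin N → ℕ} (S : Matrix (BigIx dX dA) (BigIx dX dA) ℂ)
    (hdX : ∀ i, 0 < dX i) (hdA : ∀ i, 0 < dA i) (hPE : IsParityErasure dX dA (chan S))
    (I : Finset (Fin N)) (hI : I.Nonempty) (p q : BigIx dX dA) :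
    (∑ x : PiIx dX, ∑ y : PiIx dX, ∑ α : PiIx dA, ∑ β : PiIx dA,
      (∏ i, (if i ∈ I then tk (dX i) else trk (dX i)) (p.1 i) (q.1 i) (x i) (y i)) *
        ((∏ i, (if i ∈ I then idk (dA i) else trk (dA i)) (p.2 i) (q.2 i) (α i) (β i)) *
          S (x, α) (y, β))) = 0 := by
  classical
  by_cases hok : ∀ j, j ∉ I → p.1 j = q.1 j ∧ p.2 j = q.2 j
  · -- main case
    have hGA : ∀ (α β : PiIx dA),
        (∏ i, (if i ∈ I then idk (dA i) else trk (dA i)) (p.2 i) (q.2 i) (α i) (β i))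
          = ∏ i, if i ∈ I then idk (dA i) (p.2 i) (q.2 i) (α i) (β i)
              else trk (dA i) (p.2 i) (q.2 i) (α i) (β i) := fun α β =>
      Finset.prod_congr rfl fun i _ => by split_ifs <;> rfl
    have hGX : ∀ x y : PiIx dX,
        (∏ i, (if i ∈ I then tk (dX i) else trk (dX i)) (p.1 i) (q.1 i) (x i) (y i))
          = (∏ i ∈ I, tk (dX i) (p.1 i) (q.1 i) (x i) (y i)) *
              ∏ j ∈ Iᶜ, (((dX j : ℂ))⁻¹ * if x j = y j then 1 else 0) := by
      intro x y
      rw [← Finset.prod_mul_prod_compl I]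
      congr 1
      · exact Finset.prod_congr rfl fun i hi => by rw [if_pos hi]
      · refine Finset.prod_congr rfl fun j hj => ?_
        have hj' : j ∉ I := Finset.mem_compl.mp hj
        rw [if_neg hj']
        show trk (dX j) (p.1 j) (q.1 j) (x j) (y j) = _
        rw [trk, if_pos (hok j hj').1]
    have hbr : ∀ x y : PiIx dX,
        (∑ α : PiIx dA, ∑ β : PiIx dA,
          (∏ i, if i ∈ I then idk (dA i) (p.2 i) (q.2 i) (α i) (β i)
            else trk (dA i) (p.2 i) (q.2 i) (α i) (β i)) * S (x, α) (y, β))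
        = (∏ j : {m // m ∉ I}, ((dA j.1 : ℂ))⁻¹) *
            ∑ c : (j : {m // m ∉ I}) → Fin (dA j.1),
              S (x, fun i => if h : i ∈ I then p.2 i else c ⟨i, h⟩)
                (y, fun i => if h : i ∈ I then q.2 i else c ⟨i, h⟩) := fun x y =>
      bridgeA I p.2 q.2 (fun j hj => (hok j hj).2) (fun α β => S (x, α) (y, β))
    have main := ext_PE S hdX hPE I hI p.1 q.1 p.2 q.2
    have step1 : ∀ x y : PiIx dX,
        (∑ α : PiIx dA, ∑ β : PiIx dA,
          (∏ i, (if i ∈ I then tk (dX i) else trk (dX i)) (p.1 i) (q.1 i) (x i) (y i)) *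
            ((∏ i, if i ∈ I then idk (dA i) (p.2 i) (q.2 i) (α i) (β i)
              else trk (dA i) (p.2 i) (q.2 i) (α i) (β i)) * S (x, α) (y, β)))
        = (∏ i, (if i ∈ I then tk (dX i) else trk (dX i)) (p.1 i) (q.1 i) (x i) (y i)) *
            ∑ α : PiIx dA, ∑ β : PiIx dA,
              (∏ i, if i ∈ I then idk (dA i) (p.2 i) (q.2 i) (α i) (β i)
                else trk (dA i) (p.2 i) (q.2 i) (α i) (β i)) * S (x, α) (y, β) := by
      intro x y
      rw [Finset.mul_sum]
      exact Finset.sum_congr rfl fun α _ => by rw [Finset.mul_sum]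
    calc (∑ x : PiIx dX, ∑ y : PiIx dX, ∑ α : PiIx dA, ∑ β : PiIx dA,
        (∏ i, (if i ∈ I then tk (dX i) else trk (dX i)) (p.1 i) (q.1 i) (x i) (y i)) *
          ((∏ i, (if i ∈ I then idk (dA i) else trk (dA i)) (p.2 i) (q.2 i) (α i) (β i)) *
            S (x, α) (y, β)))
        = ∑ x : PiIx dX, ∑ y : PiIx dX, ∑ c : (j : {m // m ∉ I}) → Fin (dA j.1),
            (∏ j : {m // m ∉ I}, ((dA j.1 : ℂ))⁻¹) *
              ((∏ i ∈ I, tk (dX i) (p.1 i) (q.1 i) (x i) (y i)) *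
                ((∏ j ∈ Iᶜ, (((dX j : ℂ))⁻¹ * if x j = y j then 1 else 0)) *
                  S (x, fun i => if h : i ∈ I then p.2 i else c ⟨i, h⟩)
                    (y, fun i => if h : i ∈ I then q.2 i else c ⟨i, h⟩))) := by
          refine Finset.sum_congr rfl fun x _ => Finset.sum_congr rfl fun y _ => ?_
          simp only [hGA]
          rw [step1 x y, hbr x y, hGX x y, Finset.mul_sum, Finset.mul_sum]
          exact Finset.sum_congr rfl fun c _ => by ring
      _ = (∏ j : {m // m ∉ I}, ((dA j.1 : ℂ))⁻¹) *
            ∑ c : (j : {m // m ∉ I}) → Fin (dA j.1), ∑ x : PiIx dX, ∑ y : PiIx dX,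
              (∏ i ∈ I, tk (dX i) (p.1 i) (q.1 i) (x i) (y i)) *
                ((∏ j ∈ Iᶜ, (((dX j : ℂ))⁻¹ * if x j = y j then 1 else 0)) *
                  S (x, fun i => if h : i ∈ I then p.2 i else c ⟨i, h⟩)
                    (y, fun i => if h : i ∈ I then q.2 i else c ⟨i, h⟩)) := by
          rw [sum_comm3]
          simp only [← Finset.mul_sum]
      _ = 0 := by rw [main, mul_zero]
  · -- some off-I coordinate mismatch: every summand vanishes
    push_neg at hok
    obtain ⟨j, hjI, hj⟩ := hok
    refine Finset.sum_eq_zero fun x _ => Finset.sum_eq_zero fun y _ =>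
      Finset.sum_eq_zero fun α _ => Finset.sum_eq_zero fun β _ => ?_
    by_cases h1 : p.1 j = q.1 j
    · have h2 : ¬p.2 j = q.2 j := fun h2 => hj h1 h2
      have hz : (if j ∈ I then idk (dA j) else trk (dA j)) (p.2 j) (q.2 j) (α j) (β j) = 0 := by
        rw [if_neg hjI]
        show trk (dA j) (p.2 j) (q.2 j) (α j) (β j) = 0
        rw [trk, if_neg h2, zero_mul]
      rw [Finset.prod_eq_zero
        (f := fun i => (if i ∈ I then idk (dA i) else trk (dA i)) (p.2 i) (q.2 i) (α i) (β i))
        (Finset.mem_univ j) hz, zero_mul, mul_zero]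
    · have hz : (if j ∈ I then tk (dX j) else trk (dX j)) (p.1 j) (q.1 j) (x j) (y j) = 0 := by
        rw [if_neg hjI]
        show trk (dX j) (p.1 j) (q.1 j) (x j) (y j) = 0
        rw [trk, if_neg h1, zero_mul]
      rw [Finset.prod_eq_zero (Finset.mem_univ j) hz, zero_mul]

end EntryZero

/-- if `S` is the Choi matrix of a CPTP map (positive semidefinite, with
`Tr_{A_1⊗⋯⊗A_N} S = I`) and the induced map `T(ρ) = Tr_X[(ρ^T ⊗ I) S]` is parity-erasure,
then `S` satisfies the process conditions (3) and `Tr S = ∏_i dim X_i`. -/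
theorem statement_2 {N : ℕ} (dX dA : Fin N → ℕ)
    (S : Matrix (BigIx dX dA) (BigIx dX dA) ℂ)
    (hpos : S.PosSemidef)
    (hTP : (Matrix.of fun x y : PiIx dX => ∑ a : PiIx dA, S (x, a) (y, a)) = 1)
    (hPE : IsParityErasure dX dA (chan S)) :
    ProcessConditions dX dA S ∧ S.trace = ∏ i, (dX i : ℂ) := by
  classical
  by_cases hdX : ∀ i, 0 < dX i
  · by_cases hdA : ∀ i, 0 < dA i
    · -- main case
      constructor
      · intro I hI
        have h0 := cf_id dX dA S
        have h1 := chainT dX dA S Iᶜ.toList (Finset.nodup_toList _) _ _ S h0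
          (fun j _ => rfl) (fun j _ => rfl)
        have h2 := chainD dX dA S I.toList (Finset.nodup_toList _) _ _ _ h1
          (fun j hj => by
            have hjI : j ∈ I := Finset.mem_toList.mp hj
            have hnot : j ∉ Iᶜ.toList := by
              simp [Finset.mem_toList, Finset.mem_compl, hjI]
            show (if j ∈ Iᶜ.toList then trk (dX j) else idk (dX j)) = idk (dX j)
            rw [if_neg hnot])
        have h3 := cf_congr (gX' := fun i => if i ∈ I then tk (dX i) else trk (dX i))
          (gA' := fun i => if i ∈ I then idk (dA i) else trk (dA i))
          ?_ ?_ rfl h2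
        · ext p q
          rw [h3 p q]
          simp only [Matrix.zero_apply]
          exact entry_zero S hdX hdA hPE I hI p q
        · funext i
          by_cases hi : i ∈ I <;>
            simp [Finset.mem_toList, Finset.mem_compl, hi]
        · funext i
          by_cases hi : i ∈ I <;>
            simp [Finset.mem_toList, Finset.mem_compl, hi]
      · have hx : ∀ x : PiIx dX, (∑ a : PiIx dA, S (x, a) (x, a)) = 1 := by
          intro x
          have h := congrFun (congrFun (congrArg (fun (M : Matrix (PiIx dX) (PiIx dX) ℂ) =>
            (M : _ → _ → ℂ)) hTP) x) x
          simpa [Matrix.one_apply] using h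
        have h1 : S.trace = ∑ x : PiIx dX, ∑ a : PiIx dA, S (x, a) (x, a) := by
          rw [Matrix.trace, Fintype.sum_prod_type]
          rfl
        rw [h1]
        simp only [hx]
        rw [Finset.sum_const, Finset.card_univ, Fintype.card_pi]
        simp [Fintype.card_fin]
    · -- dA degenerate while dX positive: contradiction with trace preservation
      exfalso
      obtain ⟨i0, hi0⟩ := not_forall.mp hdA
      have hi0' : dA i0 = 0 := by omega
      haveI hempty : IsEmpty (PiIx dA) := ⟨fun f => absurd (f i0).isLt (by omega)⟩
      have x0 : PiIx dX := fun i => ⟨0, hdX i⟩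
      have h := congrFun (congrFun (congrArg (fun (M : Matrix (PiIx dX) (PiIx dX) ℂ) =>
        (M : _ → _ → ℂ)) hTP) x0) x0
      simp only [Matrix.of_apply, Matrix.one_apply_eq] at h
      rw [Finset.univ_eq_empty, Finset.sum_empty] at h
      exact zero_ne_one h
  · -- dX degenerate: everything trivial
    obtain ⟨i0, hi0⟩ := not_forall.mp hdX
    have hi0' : dX i0 = 0 := by omega
    haveI hempty : IsEmpty (PiIx dX) := ⟨fun f => absurd (f i0).isLt (by omega)⟩
    constructor
    · intro I hI
      ext p q
      exact (hempty.false p.1).elim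
    · have h1 : S.trace = 0 := by
        rw [Matrix.trace]
        have : (Finset.univ : Finset (BigIx dX dA)) = ∅ := by
          rw [Finset.univ_eq_empty_iff]
          exact ⟨fun p => hempty.false p.1⟩
        rw [this, Finset.sum_empty]
      rw [h1]
      symm
      exact Finset.prod_eq_zero (Finset.mem_univ i0) (by exact_mod_cast hi0')

end ParityErasurePaper
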